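/- arXiv:2503.01065 — 2 statements merged into one kernel-verified Lean document; each statement's English description precedes it below -/
import Mathlib

section
/- The Gaussian Mills ratio x ↦ (1 - Φ(x))/φ(x) is strictly decreasing on the real line, where Φ is the standard normal CDF and φ is the standard normal density. -/
open MeasureTheory Real Set

noncomputable def stdGaussianPDF (t : ℝ) : ℝ := Real.exp (-(t ^ 2) / 2) / Real.sqrt (2 * Real.pi)

noncomputable def stdGaussianCDF (x : ℝ) : ℝ := ∫ t in Set.Iic x, stdGaussianPDF t

lemma pdf_eq (t : ℝ) : stdGaussianPDF t = Real.exp (-(1/2) * t ^ 2) / Real.sqrt (2 * Real.pi) := by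
  unfold stdGaussianPDF; ring_nf

lemma pdf_pos (t : ℝ) : 0 < stdGaussianPDF t := by
  unfold stdGaussianPDF
  have := Real.pi_pos
  positivity

lemma pdf_integrable : Integrable stdGaussianPDF := by
  have := (integrable_exp_neg_mul_sq (by norm_num : (0:ℝ) < 1/2)).div_const (Real.sqrt (2 * Real.pi))
  exact this.congr (by filter_upwards with t; rw [pdf_eq])

lemma integral_pdf : ∫ t, stdGaussianPDF t = 1 := by
  simp_rw [pdf_eq]
  rw [integral_div, integral_gaussian, div_eq_one_iff_eq (by positivity),
    show π / (1/2:ℝ) = 2 * π by ring]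

lemma tail_eq (x : ℝ) : 1 - stdGaussianCDF x = ∫ t in Ioi x, stdGaussianPDF t := by
  have h := intervalIntegral.integral_Iic_add_Ioi (b := x)
    pdf_integrable.integrableOn pdf_integrable.integrableOn
  rw [integral_pdf] at h
  unfold stdGaussianCDF
  linarith

lemma shift_eq (x : ℝ) :
    ∫ t in Ioi x, stdGaussianPDF t = ∫ s in Ioi (0:ℝ), stdGaussianPDF (s + x) := by
  have h := (measurePreserving_add_right volume x).setIntegral_preimage_emb
    (measurableEmbedding_addRight x) stdGaussianPDF (Ioi x)
  rw [← h]
  congr 1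
  ext s
  simp [mem_Ioi]

lemma ratio_eq (x : ℝ) :
    (1 - stdGaussianCDF x) / stdGaussianPDF x
      = ∫ s in Ioi (0:ℝ), Real.exp (-(x * s) - s ^ 2 / 2) := by
  rw [tail_eq, shift_eq, ← integral_div]
  apply setIntegral_congr_fun measurableSet_Ioi
  intro s _
  unfold stdGaussianPDF
  simp only
  have hs2 : Real.sqrt (2 * π) ≠ 0 := by positivity
  field_simp
  rw [← Real.exp_add]
  ring_nf

lemma integrand_integrable (x : ℝ) :
    IntegrableOn (fun s => Real.exp (-(x * s) - s ^ 2 / 2)) (Ioi (0:ℝ)) := by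
  have h : Integrable (fun s : ℝ => stdGaussianPDF (s + x) / stdGaussianPDF x) :=
    ((pdf_integrable.comp_add_right x)).div_const _
  refine (h.integrableOn).congr_fun (fun s _ => ?_) measurableSet_Ioi
  unfold stdGaussianPDF
  have hs2 : Real.sqrt (2 * π) ≠ 0 := by positivity
  field_simp
  rw [← Real.exp_add]
  ring_nf

theorem stmt_1 :
    StrictAnti (fun x : ℝ => (1 - stdGaussianCDF x) / stdGaussianPDF x) := by
  intro x y hxy
  simp only
  rw [ratio_eq, ratio_eq, ← sub_pos, ← integral_sub (integrand_integrable x) (integrand_integrable y)]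
  rw [setIntegral_pos_iff_support_of_nonneg_ae]
  · rw [show (Function.support fun s => Real.exp (-(x * s) - s ^ 2 / 2) - Real.exp (-(y * s) - s ^ 2 / 2)) ∩ Ioi 0 = Ioi 0 from ?_]
    · simp [Real.volume_Ioi]
    · ext s
      simp only [Function.mem_support, mem_inter_iff, mem_Ioi, ne_eq, sub_eq_zero, and_iff_right_iff_imp]
      intro hs
      intro hcon
      have := Real.exp_lt_exp.2 (show -(y * s) - s ^ 2 / 2 < -(x * s) - s ^ 2 / 2 by nlinarith)
      rw [hcon] at this
      exact lt_irrefl _ this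
  · filter_upwards [ae_restrict_mem measurableSet_Ioi] with s hs
    have := Real.exp_le_exp.2 (show -(y * s) - s ^ 2 / 2 ≤ -(x * s) - s ^ 2 / 2 by nlinarith [le_of_lt (mem_Ioi.1 hs)])
    simpa [sub_nonneg] using this
  · exact (integrand_integrable x).sub (integrand_integrable y)
end

section
/- For any constant c > 0, the function f(x) = (1 - Φ(x)) / (1 - Φ(x - c)) is non-increasing in x, where Φ is the standard normal CDF. -/
open Real MeasureTheory Set Filter Topology

theorem hasDerivAt_integral_Ioi {E : Type*} [NormedAddCommGroup E] [NormedSpace ℝ E]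
    [CompleteSpace E] {f : ℝ → E} (hf : Integrable f) (hcont : Continuous f) (x : ℝ) :
    HasDerivAt (fun y => ∫ t in Ioi y, f t) (-f x) x := by
  have hsplit : (fun y => ∫ t in Ioi y, f t) = fun y => (∫ t in Ioi 0, f t) - ∫ t in (0)..y, f t :=
    funext fun y => eq_sub_of_add_eq <| by
      rw [add_comm, intervalIntegral.integral_interval_add_Ioi hf.integrableOn hf.integrableOn]
  rw [hsplit]
  exact (intervalIntegral.integral_hasDerivAt_right hf.intervalIntegrable
    (hcont.stronglyMeasurableAtFilter _ _) hcont.continuousAt).const_sub _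

namespace StdGaussian

lemma pdf_eq : stdGaussianPDF = fun t => exp (-(1 / 2) * t ^ 2) / √(2 * π) := by
  ext t; rw [stdGaussianPDF]; ring_nf

lemma pdf_pos (t : ℝ) : 0 < stdGaussianPDF t := by
  unfold stdGaussianPDF; positivity

lemma continuous_pdf : Continuous stdGaussianPDF := by
  unfold stdGaussianPDF; fun_prop

lemma integrable_pdf : Integrable stdGaussianPDF := by
  rw [pdf_eq]
  exact (integrable_exp_neg_mul_sq (by norm_num)).div_const _

lemma integral_pdf : ∫ t, stdGaussianPDF t = 1 := by
  rw [pdf_eq, integral_div, integral_gaussian, show π / (1 / 2) = 2 * π by ring]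
  exact div_self (by positivity)

lemma integrable_mul_pdf : Integrable fun t => t * stdGaussianPDF t := by
  rw [pdf_eq]
  simpa only [mul_div_assoc] using
    (integrable_mul_exp_neg_mul_sq (by norm_num : (0 : ℝ) < 1 / 2)).div_const (√(2 * π))

lemma hasDerivAt_pdf (x : ℝ) : HasDerivAt stdGaussianPDF (-x * stdGaussianPDF x) x := by
  have hexp : HasDerivAt (fun t : ℝ => -(t ^ 2) / 2) (-x) x :=
    ((hasDerivAt_pow 2 x).neg.div_const 2).congr_deriv (by ring)
  exact (hexp.exp.div_const √(2 * π)).congr_deriv (by rw [stdGaussianPDF]; ring)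

lemma tendsto_pdf_atTop : Tendsto stdGaussianPDF atTop (𝓝 0) := by
  have hexp : Tendsto (fun t : ℝ => -(t ^ 2) / 2) atTop atBot :=
    (tendsto_neg_atTop_atBot.comp (tendsto_pow_atTop two_ne_zero)).atBot_div_const two_pos
  rw [← zero_div √(2 * π)]
  exact (tendsto_exp_atBot.comp hexp).div_const _

lemma integral_Ioi_mul_pdf (x : ℝ) : ∫ t in Ioi x, t * stdGaussianPDF t = stdGaussianPDF x := by
  have h := integral_Ioi_of_hasDerivAt_of_tendsto' (a := x) (f := fun t => -stdGaussianPDF t)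
    (fun t _ => (hasDerivAt_pdf t).neg.congr_deriv (by ring)) integrable_mul_pdf.integrableOn
    tendsto_pdf_atTop.neg
  simpa using h

noncomputable def tail (x : ℝ) : ℝ := ∫ t in Ioi x, stdGaussianPDF t

lemma one_sub_cdf (x : ℝ) : 1 - stdGaussianCDF x = tail x := by
  rw [← integral_pdf, ← intervalIntegral.integral_Iic_add_Ioi integrable_pdf.integrableOn
    integrable_pdf.integrableOn, stdGaussianCDF, tail, add_sub_cancel_left]

lemma tail_pos (x : ℝ) : 0 < tail x := by
  refine (setIntegral_pos_iff_support_of_nonneg_ae (ae_of_all _ fun t => (pdf_pos t).le)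
    integrable_pdf.integrableOn).2 ?_
  rw [Function.support_eq_univ fun t => (pdf_pos t).ne', univ_inter]
  simp

lemma hasDerivAt_tail (x : ℝ) : HasDerivAt tail (-stdGaussianPDF x) x :=
  hasDerivAt_integral_Ioi integrable_pdf continuous_pdf x

lemma mul_tail_le_pdf (x : ℝ) : x * tail x ≤ stdGaussianPDF x := by
  rw [tail, ← integral_const_mul, ← integral_Ioi_mul_pdf x]
  exact setIntegral_mono_on (integrable_pdf.integrableOn.const_mul x) integrable_mul_pdf.integrableOn
    measurableSet_Ioi fun t ht => mul_le_mul_of_nonneg_right (le_of_lt ht) (pdf_pos t).le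

noncomputable def millsRatio (x : ℝ) : ℝ := tail x / stdGaussianPDF x

lemma hasDerivAt_millsRatio (x : ℝ) : HasDerivAt millsRatio (x * millsRatio x - 1) x := by
  refine ((hasDerivAt_tail x).div (hasDerivAt_pdf x) (pdf_pos x).ne').congr_deriv ?_
  have := (pdf_pos x).ne'
  rw [millsRatio]; field_simp; ring

lemma millsRatio_antitone : Antitone millsRatio := by
  refine antitone_of_deriv_nonpos (fun x => (hasDerivAt_millsRatio x).differentiableAt) fun x => ?_
  have hle : x * millsRatio x ≤ 1 := by
    rw [millsRatio, ← mul_div_assoc, div_le_one (pdf_pos x)]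
    exact mul_tail_le_pdf x
  rw [(hasDerivAt_millsRatio x).deriv]
  linarith

lemma tail_mul_pdf_le {x y : ℝ} (hxy : y ≤ x) :
    tail x * stdGaussianPDF y ≤ tail y * stdGaussianPDF x :=
  (div_le_div_iff₀ (pdf_pos x) (pdf_pos y)).1 (millsRatio_antitone hxy)

end StdGaussian

open StdGaussian in
theorem stmt_2 (c : ℝ) (hc : 0 < c) :
    Antitone (fun x : ℝ => (1 - stdGaussianCDF x) / (1 - stdGaussianCDF (x - c))) := by
  simp_rw [one_sub_cdf]
  have hderiv (x : ℝ) : HasDerivAt (fun x => tail x / tail (x - c))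
      ((-stdGaussianPDF x * tail (x - c) - tail x * -stdGaussianPDF (x - c)) / tail (x - c) ^ 2) x :=
    (hasDerivAt_tail x).div (by simpa using (hasDerivAt_tail (x - c)).comp_sub_const x c)
      (tail_pos (x - c)).ne'
  refine antitone_of_deriv_nonpos (fun x => (hderiv x).differentiableAt) fun x => ?_
  rw [(hderiv x).deriv]
  refine div_nonpos_of_nonpos_of_nonneg ?_ (sq_nonneg _)
  linarith [tail_mul_pdf_le (by linarith : x - c ≤ x)]
end
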